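/- arXiv:math/9511202 — 3 statements merged into one kernel-verified Lean document; each statement's English description precedes it below -/
import Mathlib

section
/- For z, ζ, ξ in the closed unit ball of ℂ^n, the function (z,w) ↦ |1 - z·conj(w)|^{1/2} satisfies the triangle inequality: |1 - z·conj(ξ)|^{1/2} ≤ |1 - z·conj(ζ)|^{1/2} + |1 - ζ·conj(ξ)|^{1/2}. -/
/-! For `‖ζ‖ ≤ 1` the form `⟪x, y⟫ - ⟪x, ζ⟫ ⟪ζ, y⟫` is positive semidefinite: for a unit vector `ζ`
it is the inner product of the components orthogonal to `ζ`, and in general `ζ` lifts to a unit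
vector of `E × 𝕜`. Cauchy–Schwarz for it gives `|w - a b|² ≤ (1 - |a|²) (1 - |b|²)` with
`a = ⟪ξ, ζ⟫`, `b = ⟪ζ, z⟫`, `w = ⟪ξ, z⟫`. Since `1 - |a|² ≤ 2 |1 - a|` and
`|1 - a b| ≤ |1 - a| + |1 - b|`, it follows that
`|1 - w| ≤ |1 - a| + |1 - b| + 2 √|1 - a| √|1 - b| = (√|1 - a| + √|1 - b|)²`. -/

open scoped InnerProductSpace

section InnerProduct

variable {𝕜 E : Type*} [RCLike 𝕜] [NormedAddCommGroup E] [InnerProductSpace 𝕜 E]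

lemma norm_inner_le_norm_of_norm_le_one {ζ : E} (hζ : ‖ζ‖ ≤ 1) (x : E) :
    ‖⟪ζ, x⟫_𝕜‖ ≤ ‖x‖ :=
  (norm_inner_le_norm ζ x).trans (mul_le_of_le_one_left (norm_nonneg x) hζ)

lemma inner_sub_inner_smul_self_of_norm_eq_one {ζ : E} (hζ : ‖ζ‖ = 1) (x y : E) :
    ⟪x - ⟪ζ, x⟫_𝕜 • ζ, y - ⟪ζ, y⟫_𝕜 • ζ⟫_𝕜 = ⟪x, y⟫_𝕜 - ⟪x, ζ⟫_𝕜 * ⟪ζ, y⟫_𝕜 := by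
  simp only [inner_sub_left, inner_sub_right, inner_smul_left, inner_smul_right, inner_conj_symm,
    inner_self_eq_norm_sq_to_K, hζ, RCLike.ofReal_one]
  ring

lemma re_inner_sub_inner_smul_self_of_norm_eq_one {ζ : E} (hζ : ‖ζ‖ = 1) (x : E) :
    RCLike.re ⟪x - ⟪ζ, x⟫_𝕜 • ζ, x - ⟪ζ, x⟫_𝕜 • ζ⟫_𝕜 = ‖x‖ ^ 2 - ‖⟪ζ, x⟫_𝕜‖ ^ 2 := by
  rw [inner_sub_inner_smul_self_of_norm_eq_one hζ, ← inner_conj_symm x ζ, RCLike.conj_mul,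
    map_sub, inner_self_eq_norm_sq]
  norm_cast

lemma norm_inner_sub_inner_mul_inner_sq_le_of_norm_eq_one {ζ : E} (hζ : ‖ζ‖ = 1) (x y : E) :
    ‖⟪x, y⟫_𝕜 - ⟪x, ζ⟫_𝕜 * ⟪ζ, y⟫_𝕜‖ ^ 2 ≤
      (‖x‖ ^ 2 - ‖⟪ζ, x⟫_𝕜‖ ^ 2) * (‖y‖ ^ 2 - ‖⟪ζ, y⟫_𝕜‖ ^ 2) := by
  have h := inner_mul_inner_self_le (𝕜 := 𝕜) (x - ⟪ζ, x⟫_𝕜 • ζ) (y - ⟪ζ, y⟫_𝕜 • ζ)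
  rwa [norm_inner_symm (y - _), ← sq, inner_sub_inner_smul_self_of_norm_eq_one hζ,
    re_inner_sub_inner_smul_self_of_norm_eq_one hζ,
    re_inner_sub_inner_smul_self_of_norm_eq_one hζ] at h

lemma norm_inner_sub_inner_mul_inner_sq_le {ζ : E} (hζ : ‖ζ‖ ≤ 1) (x y : E) :
    ‖⟪x, y⟫_𝕜 - ⟪x, ζ⟫_𝕜 * ⟪ζ, y⟫_𝕜‖ ^ 2 ≤
      (‖x‖ ^ 2 - ‖⟪ζ, x⟫_𝕜‖ ^ 2) * (‖y‖ ^ 2 - ‖⟪ζ, y⟫_𝕜‖ ^ 2) := by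
  set c : ℝ := √(1 - ‖ζ‖ ^ 2)
  have hc : c ^ 2 = 1 - ‖ζ‖ ^ 2 := Real.sq_sqrt (by nlinarith [norm_nonneg ζ])
  have hζ' : ‖WithLp.toLp 2 (ζ, (c : 𝕜))‖ = 1 := by
    rw [← pow_eq_one_iff_of_nonneg (norm_nonneg _) two_ne_zero, WithLp.prod_norm_sq_eq_of_L2]
    simp [hc]
  have h := norm_inner_sub_inner_mul_inner_sq_le_of_norm_eq_one (𝕜 := 𝕜) hζ'
    (WithLp.toLp 2 (x, 0)) (WithLp.toLp 2 (y, 0))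
  simpa using h

end InnerProduct

section NormedRing

variable {R : Type*} [NormedRing R]

lemma norm_one_sub_mul_le {a b : R} (ha : ‖a‖ ≤ 1) : ‖1 - a * b‖ ≤ ‖1 - a‖ + ‖1 - b‖ :=
  calc ‖1 - a * b‖ = ‖(1 - a) + a * (1 - b)‖ := by noncomm_ring
    _ ≤ ‖1 - a‖ + ‖a‖ * ‖1 - b‖ := (norm_add_le _ _).trans (by gcongr; exact norm_mul_le _ _)
    _ ≤ ‖1 - a‖ + ‖1 - b‖ := by gcongr; exact mul_le_of_le_one_left (norm_nonneg _) ha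

lemma one_sub_norm_sq_le_two_mul_norm_one_sub [NormOneClass R] {a : R} (ha : ‖a‖ ≤ 1) :
    1 - ‖a‖ ^ 2 ≤ 2 * ‖1 - a‖ := by
  have h := norm_sub_norm_le (1 : R) a
  rw [norm_one] at h
  nlinarith [norm_nonneg a]

lemma sqrt_norm_one_sub_le_of_norm_sub_mul_sq_le [NormOneClass R] {a b w : R} (ha : ‖a‖ ≤ 1)
    (hb : ‖b‖ ≤ 1) (h : ‖w - a * b‖ ^ 2 ≤ (1 - ‖a‖ ^ 2) * (1 - ‖b‖ ^ 2)) :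
    √‖1 - w‖ ≤ √‖1 - a‖ + √‖1 - b‖ := by
  set A := ‖1 - a‖
  set B := ‖1 - b‖
  have hcross : ‖w - a * b‖ ≤ 2 * √A * √B := by
    refine abs_le_of_sq_le_sq' (h.trans ?_) (by positivity) |>.2
    calc (1 - ‖a‖ ^ 2) * (1 - ‖b‖ ^ 2) ≤ (2 * A) * (2 * B) :=
          mul_le_mul (one_sub_norm_sq_le_two_mul_norm_one_sub ha)
            (one_sub_norm_sq_le_two_mul_norm_one_sub hb)
            (sub_nonneg.2 (pow_le_one₀ (norm_nonneg b) hb)) (by positivity)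
      _ = (2 * √A * √B) ^ 2 := by
          rw [mul_pow, mul_pow, Real.sq_sqrt (norm_nonneg _), Real.sq_sqrt (norm_nonneg _)]; ring
  rw [Real.sqrt_le_iff]
  refine ⟨by positivity, ?_⟩
  calc ‖1 - w‖ ≤ ‖1 - a * b‖ + ‖w - a * b‖ := by
        simpa using norm_sub_le (1 - a * b) (w - a * b)
    _ ≤ A + B + 2 * √A * √B := add_le_add (norm_one_sub_mul_le ha) hcross
    _ = (√A + √B) ^ 2 := by
        rw [add_sq, Real.sq_sqrt (norm_nonneg _), Real.sq_sqrt (norm_nonneg _)]; ring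

end NormedRing

theorem stmt3 {n : ℕ} (z ζ ξ : EuclideanSpace ℂ (Fin n))
    (hz : ‖z‖ ≤ 1) (hζ : ‖ζ‖ ≤ 1) (hξ : ‖ξ‖ ≤ 1) :
    Real.sqrt (‖(1 - ⟪ξ, z⟫_ℂ)‖) ≤
      Real.sqrt (‖(1 - ⟪ζ, z⟫_ℂ)‖) + Real.sqrt (‖(1 - ⟪ξ, ζ⟫_ℂ)‖) := by
  have ha : ‖⟪ξ, ζ⟫_ℂ‖ ≤ 1 := (norm_inner_le_norm_of_norm_le_one (𝕜 := ℂ) hξ ζ).trans hζ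
  have hz' : ‖⟪ζ, z⟫_ℂ‖ ≤ ‖z‖ := norm_inner_le_norm_of_norm_le_one hζ z
  have hbound := norm_inner_sub_inner_mul_inner_sq_le (𝕜 := ℂ) hζ ξ z
  rw [norm_inner_symm ζ ξ] at hbound
  refine (sqrt_norm_one_sub_le_of_norm_sub_mul_sq_le ha (hz'.trans hz)
    (hbound.trans ?_)).trans_eq (add_comm _ _)
  exact mul_le_mul (sub_le_sub_right (pow_le_one₀ (norm_nonneg _) hξ) _)
    (sub_le_sub_right (pow_le_one₀ (norm_nonneg _) hz) _)
    (sub_nonneg.2 (pow_le_pow_left₀ (norm_nonneg _) hz' 2))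
    (sub_nonneg.2 (pow_le_one₀ (norm_nonneg _) ha))
end

section
/- Let ∞ ≥ p ≥ p' > 0, α > -1/p, α' > -1/p'. If α + 1/p < α' + 1/p', then B_α^p(B^n) ⊆ B_{α'}^{p'}(B^n), with a norm inequality ‖f‖_{p',α'} ≤ C‖f‖_{p,α}. -/
open MeasureTheory
open scoped ENNReal InnerProductSpace

noncomputable instance (n : ℕ) : MeasurableSpace (EuclideanSpace ℂ (Fin n)) := borel _
instance (n : ℕ) : BorelSpace (EuclideanSpace ℂ (Fin n)) := ⟨rfl⟩

/-- Lebesgue measure on `EuclideanSpace ℂ (Fin n)`, obtained from the product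
Lebesgue measure on `Fin n → ℂ`. -/
noncomputable def volE (n : ℕ) : Measure (EuclideanSpace ℂ (Fin n)) :=
  Measure.map (⇑(EuclideanSpace.equiv (Fin n) ℂ).symm) volume

open scoped Classical in
noncomputable def projA {n : ℕ} (a z : EuclideanSpace ℂ (Fin n)) : EuclideanSpace ℂ (Fin n) :=
  if a = 0 then 0 else ((⟪a, z⟫_ℂ) / (⟪a, a⟫_ℂ)) • a

/-- The Möbius involution `φ_a` of the unit ball exchanging `0` and `a` (Rudin 2.2.2). -/
noncomputable def mobius {n : ℕ} (a z : EuclideanSpace ℂ (Fin n)) : EuclideanSpace ℂ (Fin n) :=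
  ((1 : ℂ) - ⟪a, z⟫_ℂ)⁻¹ •
    ((a - projA a z) - ((Real.sqrt (1 - ‖a‖ ^ 2) : ℝ) : ℂ) • (z - projA a z))

open scoped Classical in
/-- The norm of `f` in the weighted Bergman space `B_α^p(B^n)`; for `p = ∞` this is
`sup_z (1-|z|²)^α |f z|`. Valued in `ℝ≥0∞`. -/
noncomputable def wNorm (n : ℕ) (p : ℝ≥0∞) (α : ℝ)
    (f : EuclideanSpace ℂ (Fin n) → ℂ) : ℝ≥0∞ :=
  if p = ⊤ then
    ⨆ z ∈ Metric.ball (0 : EuclideanSpace ℂ (Fin n)) 1,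
      ENNReal.ofReal ((1 - ‖z‖ ^ 2) ^ α * ‖f z‖)
  else
    (∫⁻ z in Metric.ball (0 : EuclideanSpace ℂ (Fin n)) 1,
      ENNReal.ofReal ((1 - ‖z‖ ^ 2) ^ (α * p.toReal) * ‖f z‖ ^ p.toReal)
        ∂(volE n)) ^ (1 / p.toReal)

/-! For `p' < ∞` write `(1 - ‖z‖²)^α' |f| = (1 - ‖z‖²)^(α' - α) · (1 - ‖z‖²)^α |f|` and apply
Hölder's inequality with `1/p' = 1/p + 1/r`. The hypothesis `α + 1/p < α' + 1/p'` says exactly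
that `(α' - α) r > -1`, so the weight `(1 - ‖z‖²)^(α' - α)` lies in `L^r` of the ball: in polar
coordinates this is the integrability of `(1 - t)^((α' - α) r)` near `t = 1`. For `p' = ∞` both
norms are suprema and `(1 - ‖z‖²)^α` decreases in `α`. -/

open Metric Set ENNReal

instance (n : ℕ) : (volE n).IsAddHaarMeasure :=
  (EuclideanSpace.equiv (Fin n) ℂ).symm.isAddHaarMeasure_map volume

lemma one_sub_norm_sq_mem_Ioc {E : Type*} [SeminormedAddCommGroup E] {z : E}
    (hz : z ∈ ball (0 : E) 1) : 1 - ‖z‖ ^ 2 ∈ Ioc 0 1 := by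
  rw [mem_ball_zero_iff] at hz
  constructor <;> nlinarith [norm_nonneg z]

lemma integrableOn_pow_mul_one_sub_sq_rpow (k : ℕ) {β : ℝ} (hβ : -1 < β) :
    IntegrableOn (fun y : ℝ => y ^ k * (1 - y ^ 2) ^ β) (Ioo 0 1) := by
  have hsing : IntegrableOn (fun y : ℝ => (1 - y) ^ β) (Icc 0 1) := by
    rw [integrableOn_Icc_iff_integrableOn_Ioc]
    simpa using
      ((intervalIntegral.intervalIntegrable_rpow' hβ (a := 0) (b := 1)).comp_sub_left 1).symm.1
  have hcont : ContinuousOn (fun y : ℝ => (1 + y) ^ β * y ^ k) (Icc 0 1) := by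
    refine ContinuousOn.mul ?_ (continuous_pow k).continuousOn
    exact ContinuousOn.rpow_const (by fun_prop) fun y hy => Or.inl (by linarith [hy.1])
  refine ((hsing.mul_continuousOn hcont isCompact_Icc).mono_set Ioo_subset_Icc_self).congr_fun
    (fun y hy => ?_) measurableSet_Ioo
  rw [show 1 - y ^ 2 = (1 - y) * (1 + y) by ring,
    Real.mul_rpow (by linarith [hy.2]) (by linarith [hy.1])]
  ring

section BallWeight

variable {E : Type*} [NormedAddCommGroup E] [NormedSpace ℝ E] [FiniteDimensional ℝ E]
  [MeasurableSpace E] [BorelSpace E] (μ : Measure E) [μ.IsAddHaarMeasure]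

lemma integrableOn_one_sub_norm_sq_rpow_ball {β : ℝ} (hβ : -1 < β) :
    IntegrableOn (fun z : E => (1 - ‖z‖ ^ 2) ^ β) (ball 0 1) μ := by
  rcases subsingleton_or_nontrivial E with hE | hE
  · have hconst : (fun z : E => (1 - ‖z‖ ^ 2) ^ β) = fun _ => 1 := by
      funext z
      simp [Subsingleton.elim z 0]
    rw [hconst]
    exact integrableOn_const measure_ball_lt_top.ne
  · simpa only [smul_eq_mul] using (integrableOn_fun_norm_addHaar μ).2
      (integrableOn_pow_mul_one_sub_sq_rpow (Module.finrank ℝ E - 1) hβ)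

lemma memLp_one_sub_norm_sq_rpow_ball {r : ℝ≥0∞} {γ : ℝ} (hγ : -1 / r.toReal < γ) :
    MemLp (fun z : E => (1 - ‖z‖ ^ 2) ^ γ) r (μ.restrict (ball 0 1)) := by
  have hmeas : AEStronglyMeasurable (fun z : E => (1 - ‖z‖ ^ 2) ^ γ) (μ.restrict (ball 0 1)) :=
    (by fun_prop : Measurable fun z : E => (1 - ‖z‖ ^ 2) ^ γ).aestronglyMeasurable
  rcases eq_or_ne r ⊤ with rfl | hr_top
  · -- at `r = ∞` the hypothesis reads `0 < γ`, since `(∞).toReal = 0`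
    have hγ0 : 0 < γ := by simpa using hγ
    refine memLp_top_of_bound hmeas 1 ?_
    filter_upwards [ae_restrict_mem measurableSet_ball] with z hz
    obtain ⟨h0, h1⟩ := one_sub_norm_sq_mem_Ioc hz
    rw [Real.norm_of_nonneg (Real.rpow_nonneg h0.le _)]
    exact Real.rpow_le_one h0.le h1 hγ0.le
  rcases eq_or_ne r 0 with rfl | hr0
  · exact memLp_zero_iff_aestronglyMeasurable.2 hmeas
  have hR : 0 < r.toReal := ENNReal.toReal_pos hr0 hr_top
  rw [← integrable_norm_rpow_iff hmeas hr0 hr_top]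
  refine (integrableOn_one_sub_norm_sq_rpow_ball μ (β := γ * r.toReal) ?_).congr_fun
    (fun z hz => ?_) measurableSet_ball
  · linarith [(div_lt_iff₀ hR).1 hγ]
  · have h0 := (one_sub_norm_sq_mem_Ioc hz).1
    rw [Real.norm_of_nonneg (Real.rpow_nonneg h0.le _), ← Real.rpow_mul h0.le]

end BallWeight

lemma holderTriple_inv_sub_inv {p p' : ℝ≥0∞} (hpp' : p' ≤ p) :
    HolderTriple (p'⁻¹ - p⁻¹)⁻¹ p p' where
  inv_add_inv_eq_inv := by rw [inv_inv, tsub_add_cancel_of_le (ENNReal.inv_le_inv.2 hpp')]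

lemma one_div_toReal_inv_sub_inv {p p' : ℝ≥0∞} (hp' : p' ≠ 0) (hpp' : p' ≤ p) :
    1 / (p'⁻¹ - p⁻¹)⁻¹.toReal = 1 / p'.toReal - 1 / p.toReal := by
  rw [toReal_inv, one_div, inv_inv,
    toReal_sub_of_le (ENNReal.inv_le_inv.2 hpp') (inv_ne_top.2 hp'), toReal_inv, toReal_inv,
    one_div, one_div]

section WeightedNorm

variable {n : ℕ}

lemma wNorm_eq_eLpNorm {p : ℝ≥0∞} (hp0 : p ≠ 0) (hp : p ≠ ⊤) (α : ℝ)
    (f : EuclideanSpace ℂ (Fin n) → ℂ) :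
    wNorm n p α f =
      eLpNorm (fun z => (1 - ‖z‖ ^ 2) ^ α * ‖f z‖) p ((volE n).restrict (ball 0 1)) := by
  rw [wNorm, if_neg hp, eLpNorm_eq_lintegral_rpow_enorm_toReal hp0 hp]
  congr 1
  refine setLIntegral_congr_fun measurableSet_ball fun z hz => ?_
  have h0 := (one_sub_norm_sq_mem_Ioc hz).1.le
  rw [Real.enorm_of_nonneg (by positivity), ofReal_rpow_of_nonneg (by positivity) toReal_nonneg,
    Real.mul_rpow (by positivity) (norm_nonneg _), ← Real.rpow_mul h0]

lemma eLpNorm_le_wNorm (p : ℝ≥0∞) (α : ℝ) (f : EuclideanSpace ℂ (Fin n) → ℂ) :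
    eLpNorm (fun z => (1 - ‖z‖ ^ 2) ^ α * ‖f z‖) p ((volE n).restrict (ball 0 1)) ≤
      wNorm n p α f := by
  rcases eq_or_ne p 0 with rfl | hp0
  · simp
  rcases eq_or_ne p ⊤ with rfl | hp
  · rw [eLpNorm_exponent_top, eLpNormEssSup, wNorm, if_pos rfl]
    refine essSup_le_of_ae_le _ ?_
    filter_upwards [ae_restrict_mem measurableSet_ball] with z hz
    have h0 := (one_sub_norm_sq_mem_Ioc hz).1.le
    rw [Real.enorm_of_nonneg (by positivity)]
    exact le_biSup (fun z => ENNReal.ofReal ((1 - ‖z‖ ^ 2) ^ α * ‖f z‖)) hz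
  · exact (wNorm_eq_eLpNorm hp0 hp α f).ge

lemma wNorm_top_antitone {α α' : ℝ} (hαα' : α ≤ α') (f : EuclideanSpace ℂ (Fin n) → ℂ) :
    wNorm n ⊤ α' f ≤ wNorm n ⊤ α f := by
  simp only [wNorm, if_pos]
  refine iSup₂_mono fun z hz => ofReal_le_ofReal ?_
  obtain ⟨h0, h1⟩ := one_sub_norm_sq_mem_Ioc hz
  exact mul_le_mul_of_nonneg_right (Real.rpow_le_rpow_of_exponent_ge h0 h1 hαα') (norm_nonneg _)

end WeightedNorm

theorem stmt9_general (n : ℕ) (p p' : ℝ≥0∞) (α α' : ℝ) (hp' : 0 < p') (hpp' : p' ≤ p)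
    (h : α + 1/p.toReal < α' + 1/p'.toReal) :
    ∃ C : ℝ≥0∞, 0 < C ∧ C < ⊤ ∧
      ∀ f : EuclideanSpace ℂ (Fin n) → ℂ,
        DifferentiableOn ℂ f (Metric.ball (0 : EuclideanSpace ℂ (Fin n)) 1) →
        wNorm n p' α' f ≤ C * wNorm n p α f := by
  rcases eq_or_ne p' ⊤ with rfl | hp'_top
  · obtain rfl : p = ⊤ := top_le_iff.mp hpp'
    exact ⟨1, one_pos, one_lt_top, fun f _ => by
      simpa using wNorm_top_antitone (by simpa using h.le) f⟩
  set μ := (volE n).restrict (ball (0 : EuclideanSpace ℂ (Fin n)) 1)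
  set w := fun z : EuclideanSpace ℂ (Fin n) => (1 - ‖z‖ ^ 2) ^ (α' - α)
  set r := (p'⁻¹ - p⁻¹)⁻¹
  have hrpp' : HolderTriple r p p' := holderTriple_inv_sub_inv hpp'
  have hw : MemLp w r μ := by
    refine memLp_one_sub_norm_sq_rpow_ball _ ?_
    rw [neg_div, one_div_toReal_inv_sub_inv hp'.ne' hpp']
    linarith
  refine ⟨eLpNorm w r μ + 1, by positivity, by finiteness [hw.eLpNorm_lt_top], fun f hf => ?_⟩
  set g := fun z : EuclideanSpace ℂ (Fin n) => (1 - ‖z‖ ^ 2) ^ α * ‖f z‖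
  have hg : AEStronglyMeasurable g μ :=
    (by fun_prop : Measurable fun z : EuclideanSpace ℂ (Fin n) => (1 - ‖z‖ ^ 2) ^ α)
      |>.aestronglyMeasurable.mul (hf.continuousOn.aestronglyMeasurable measurableSet_ball).norm
  calc wNorm n p' α' f = eLpNorm (w • g) p' μ := by
        rw [wNorm_eq_eLpNorm hp'.ne' hp'_top]
        refine eLpNorm_congr_ae (ae_restrict_of_forall_mem measurableSet_ball fun z hz => ?_)
        have h0 := (one_sub_norm_sq_mem_Ioc hz).1
        simp only [w, g, Pi.smul_apply', smul_eq_mul, ← mul_assoc, ← Real.rpow_add h0]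
        rw [sub_add_cancel]
    _ ≤ eLpNorm w r μ * eLpNorm g p μ := eLpNorm_smul_le_mul_eLpNorm hg hw.1
    _ ≤ (eLpNorm w r μ + 1) * wNorm n p α f := by
        gcongr
        · exact le_self_add
        · exact eLpNorm_le_wNorm p α f

theorem stmt9 (n : ℕ) (p p' : ℝ≥0∞) (α α' : ℝ) (hp' : 0 < p') (hpp' : p' ≤ p)
    (hα : -1/p.toReal < α) (hα' : -1/p'.toReal < α')
    (h : α + 1/p.toReal < α' + 1/p'.toReal) :
    ∃ C : ℝ≥0∞, 0 < C ∧ C < ⊤ ∧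
      ∀ f : EuclideanSpace ℂ (Fin n) → ℂ,
        DifferentiableOn ℂ f (Metric.ball (0 : EuclideanSpace ℂ (Fin n)) 1) →
        wNorm n p' α' f ≤ C * wNorm n p α f :=
  stmt9_general n p p' α α' hp' hpp' h
end

section
/- (Mills' Lemma) Let A_{jk}, j,k ∈ ℤ_+, be nonnegative reals with A_{jk} = A_{kj} and A_{jj} = 0 for all j,k. If sup_k ∑_j A_{jk} = M < ∞, then there is a partition ℤ_+ = S₁ ∪ S₂ with S₁ ∩ S₂ = ∅ such that sup_{k∈S_i} ∑_{j∈S_i} A_{jk} ≤ M/2 for i = 1, 2. -/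
/-! On a finite set, a 2-colouring minimising the total weight of monochromatic pairs is locally
optimal: moving one vertex `k` to the other class cannot decrease that weight, so the weight from
`k` into its own class is at most the weight into the other class, i.e. at most half of the row sum
`∑ⱼ A j k`. Colourings of `{0, …, n - 1}` with this property have a limit along an ultrafilter;
every finite piece of a class of the limit colouring is a piece of a class of some finite colouring,
so the bound survives the limit. -/

open Finset
open scoped ENNReal

namespace Mills

section Finite

variable {ι R : Type*} [CommRing R] (A : ι → ι → R)

def pairSum (s : Finset ι) : R := ∑ j ∈ s, ∑ l ∈ s, A j l

variable {A} [DecidableEq ι]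

lemma pairSum_insert (hsym : ∀ j k, A j k = A k j) (hdiag : ∀ j, A j j = 0)
    {s : Finset ι} {k : ι} (hk : k ∉ s) :
    pairSum A (insert k s) = pairSum A s + 2 * ∑ j ∈ s, A j k := by
  have hrow : ∑ l ∈ s, A k l = ∑ l ∈ s, A l k := sum_congr rfl fun l _ => hsym k l
  simp only [pairSum, sum_insert hk, hdiag k, sum_add_distrib, hrow]
  ring

variable [LinearOrder R] [IsStrictOrderedRing R]

lemma sum_le_sum_of_pairSum_add_pairSum_le (hsym : ∀ j k, A j k = A k j) (hdiag : ∀ j, A j j = 0)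
    {s r : Finset ι} {k : ι} (hks : k ∈ s) (hkr : k ∉ r)
    (h : pairSum A s + pairSum A r ≤ pairSum A (s.erase k) + pairSum A (insert k r)) :
    ∑ j ∈ s, A j k ≤ ∑ j ∈ r, A j k := by
  have hs := pairSum_insert hsym hdiag (notMem_erase k s)
  rw [insert_erase hks] at hs
  rw [hs, pairSum_insert hsym hdiag hkr] at h
  rw [← sum_erase s (f := fun j => A j k) (hdiag k)]
  linarith

lemma exists_sum_le_sum_sdiff (hsym : ∀ j k, A j k = A k j) (hdiag : ∀ j, A j j = 0)
    (u : Finset ι) :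
    ∃ s ⊆ u, (∀ k ∈ s, ∑ j ∈ s, A j k ≤ ∑ j ∈ u \ s, A j k) ∧
      ∀ k ∈ u \ s, ∑ j ∈ u \ s, A j k ≤ ∑ j ∈ s, A j k := by
  obtain ⟨s, hsu, hmin⟩ := exists_min_image u.powerset
    (fun t => pairSum A t + pairSum A (u \ t)) ⟨∅, empty_mem_powerset u⟩
  rw [mem_powerset] at hsu
  refine ⟨s, hsu, fun k hk => ?_, fun k hk => ?_⟩
  · have h := hmin (s.erase k) (mem_powerset.2 ((erase_subset k s).trans hsu))
    rw [sdiff_erase (hsu hk)] at h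
    exact sum_le_sum_of_pairSum_add_pairSum_le hsym hdiag hk (fun h' => (mem_sdiff.1 h').2 hk) h
  · obtain ⟨hku, hks⟩ := mem_sdiff.1 hk
    have h := hmin (insert k s) (mem_powerset.2 (insert_subset hku hsu))
    rw [sdiff_insert] at h
    refine sum_le_sum_of_pairSum_add_pairSum_le hsym hdiag hk hks ?_
    linarith

theorem exists_two_mul_sum_class_le (hsym : ∀ j k, A j k = A k j) (hdiag : ∀ j, A j j = 0)
    (u : Finset ι) :
    ∃ s : Finset ι, ∀ k ∈ u, 2 * ∑ j ∈ u with (j ∈ s ↔ k ∈ s), A j k ≤ ∑ j ∈ u, A j k := by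
  obtain ⟨s, hsu, hin, hout⟩ := exists_sum_le_sum_sdiff hsym hdiag u
  refine ⟨s, fun k hku => ?_⟩
  have hclass : ∑ j ∈ u with (j ∈ s ↔ k ∈ s), A j k ≤ ∑ j ∈ u with ¬(j ∈ s ↔ k ∈ s), A j k := by
    by_cases hks : k ∈ s
    · simp only [hks, iff_true, filter_mem_eq_inter, inter_eq_right.2 hsu, filter_notMem_eq_sdiff]
      exact hin k hks
    · simp only [hks, iff_false, not_not, filter_mem_eq_inter, inter_eq_right.2 hsu,
        filter_notMem_eq_sdiff]
      exact hout k (mem_sdiff.2 ⟨hku, hks⟩)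
  rw [← sum_filter_add_sum_filter_not u (fun j => j ∈ s ↔ k ∈ s)]
  linarith

end Finite

lemma _root_.Ultrafilter.eventually_mem_iff_mem_setOf {α β : Type*} (U : Ultrafilter β)
    (T : β → Set α) (a : α) :
    ∀ᶠ n in U, (a ∈ T n ↔ a ∈ {x | ∀ᶠ n in U, x ∈ T n}) := by
  by_cases ha : ∀ᶠ n in U, a ∈ T n
  · filter_upwards [ha] with n hn using iff_of_true hn ha
  · filter_upwards [Ultrafilter.eventually_not.2 ha] with n hn using iff_of_false hn ha

theorem exists_set_two_mul_sum_class_le {A : ℕ → ℕ → ℝ} (hnn : ∀ j k, 0 ≤ A j k)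
    (hsym : ∀ j k, A j k = A k j) (hdiag : ∀ j, A j j = 0) :
    ∃ S : Set ℕ, ∀ k (F : Finset ℕ), (∀ j ∈ F, j ∈ S ↔ k ∈ S) →
      2 * ∑ j ∈ F, ENNReal.ofReal (A j k) ≤ ∑' j, ENNReal.ofReal (A j k) := by
  choose s hs using fun n => exists_two_mul_sum_class_le hsym hdiag (range n)
  obtain ⟨U, hU⟩ := Ultrafilter.exists_le (Filter.atTop : Filter ℕ)
  set S : Set ℕ := {x | ∀ᶠ n in U, x ∈ (s n : Set ℕ)}
  refine ⟨S, fun k F hF => ?_⟩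
  obtain ⟨n, hn⟩ : ∃ n, ∀ j ∈ insert k F, j < n ∧ (j ∈ (s n : Set ℕ) ↔ j ∈ S) :=
    ((Filter.eventually_all_finset _).2 fun j _ =>
      ((Filter.eventually_gt_atTop j).filter_mono hU).and
        (U.eventually_mem_iff_mem_setOf _ j)).exists
  have hkn := hn k (mem_insert_self k F)
  have hFsub : F ⊆ {j ∈ range n | j ∈ s n ↔ k ∈ s n} := fun j hj => by
    have hjn := hn j (mem_insert_of_mem hj)
    simp only [mem_coe] at hjn hkn
    exact mem_filter.2 ⟨mem_range.2 hjn.1, by rw [hjn.2, hkn.2]; exact hF j hj⟩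
  have hreal : 2 * ∑ j ∈ F, A j k ≤ ∑ j ∈ range n, A j k :=
    calc 2 * ∑ j ∈ F, A j k ≤ 2 * ∑ j ∈ range n with (j ∈ s n ↔ k ∈ s n), A j k := by
          gcongr 2 * ?_
          exact sum_le_sum_of_subset_of_nonneg hFsub fun j _ _ => hnn j k
      _ ≤ ∑ j ∈ range n, A j k := hs n k (mem_range.2 hkn.1)
  calc 2 * ∑ j ∈ F, ENNReal.ofReal (A j k) = ENNReal.ofReal (2 * ∑ j ∈ F, A j k) := by
        rw [ENNReal.ofReal_mul zero_le_two, ENNReal.ofReal_sum_of_nonneg fun j _ => hnn j k,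
          ENNReal.ofReal_ofNat]
    _ ≤ ENNReal.ofReal (∑ j ∈ range n, A j k) := ENNReal.ofReal_le_ofReal hreal
    _ = ∑ j ∈ range n, ENNReal.ofReal (A j k) := ENNReal.ofReal_sum_of_nonneg fun j _ => hnn j k
    _ ≤ ∑' j, ENNReal.ofReal (A j k) := ENNReal.sum_le_tsum _

lemma _root_.ENNReal.mul_tsum_subtype_le {α : Type*} {P : α → Prop} {f : α → ℝ≥0∞}
    {a c : ℝ≥0∞} (h : ∀ F : Finset α, (∀ j ∈ F, P j) → a * ∑ j ∈ F, f j ≤ c) :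
    a * ∑' j : {j // P j}, f j ≤ c := by
  rw [← ENNReal.tsum_mul_left]
  refine ENNReal.summable.tsum_le_of_sum_le fun F => ?_
  rw [← mul_sum]
  simpa using h (F.map (Function.Embedding.subtype P)) fun j hj => by
    obtain ⟨j, -, rfl⟩ := mem_map.1 hj
    exact j.2

lemma _root_.ENNReal.le_ofReal_half_of_two_mul_le {x : ℝ≥0∞} {M : ℝ}
    (h : 2 * x ≤ ENNReal.ofReal M) : x ≤ ENNReal.ofReal (M / 2) := by
  rw [ENNReal.ofReal_div_of_pos two_pos, ENNReal.ofReal_ofNat]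
  exact ENNReal.le_div_iff_mul_le (Or.inl two_ne_zero) (Or.inl ENNReal.ofNat_ne_top) |>.2
    (by rwa [mul_comm])

end Mills

theorem stmt18 (A : ℕ → ℕ → ℝ) (hnn : ∀ j k, 0 ≤ A j k)
    (hsym : ∀ j k, A j k = A k j) (hdiag : ∀ j, A j j = 0)
    (M : ℝ) (hM : ∀ k, (∑' j, ENNReal.ofReal (A j k)) ≤ ENNReal.ofReal M) :
    ∃ S : Set ℕ,
      (∀ k ∈ S, (∑' j : S, ENNReal.ofReal (A (j : ℕ) k)) ≤ ENNReal.ofReal (M/2)) ∧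
      (∀ k ∉ S, (∑' j : {j : ℕ // j ∉ S}, ENNReal.ofReal (A (j : ℕ) k)) ≤
        ENNReal.ofReal (M/2)) := by
  obtain ⟨S, hS⟩ := Mills.exists_set_two_mul_sum_class_le hnn hsym hdiag
  refine ⟨S, fun k hk => ?_, fun k hk => ?_⟩
  · refine ENNReal.le_ofReal_half_of_two_mul_le <| le_trans ?_ (hM k)
    exact ENNReal.mul_tsum_subtype_le fun F hF =>
      hS k F fun j hj => iff_of_true (hF j hj) hk
  · refine ENNReal.le_ofReal_half_of_two_mul_le <| le_trans ?_ (hM k)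
    exact ENNReal.mul_tsum_subtype_le fun F hF =>
      hS k F fun j hj => iff_of_false (hF j hj) hk
end
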